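/- arXiv:1510.01607 — 7 statements merged into one kernel-verified Lean document; each statement's English description precedes it below -/
import Mathlib

section
/- If s ∈ D_L(u) ∩ D_L(v), then u ≤_R v if and only if su ≤_R sv. -/
open CoxeterSystem

variable {A W : Type*} [Group W] {M : CoxeterMatrix A}

/-- Right weak order: `u ≤_R v` iff `ℓ(u) + ℓ(u⁻¹v) = ℓ(v)`. -/
def wle (cs : CoxeterSystem M W) (u v : W) : Prop :=
  cs.length u + cs.length (u⁻¹ * v) = cs.length v

/- Left multiplication by `g` leaves `u⁻¹ v` unchanged, so only the lengths of the endpoints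
move, and they move by the same amount. -/
theorem wle_mul_left_iff (cs : CoxeterSystem M W) {g u v : W}
    (h : cs.length (g * u) + cs.length v = cs.length u + cs.length (g * v)) :
    wle cs u v ↔ wle cs (g * u) (g * v) := by
  simp only [wle, mul_inv_rev, mul_assoc, inv_mul_cancel_left]
  omega

/-- If `s ∈ D_L(u) ∩ D_L(v)`, then `u ≤_R v` iff `su ≤_R sv`. -/
theorem stmt_0 (cs : CoxeterSystem M W) (u v : W) (i : A)
    (hu : cs.IsLeftDescent u i) (hv : cs.IsLeftDescent v i) :
    wle cs u v ↔ wle cs (cs.simple i * u) (cs.simple i * v) := by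
  rw [cs.isLeftDescent_iff] at hu hv
  exact wle_mul_left_iff cs (by omega)
end

section
/- If s ∉ D_L(u) and s ∉ D_L(v), then u ≤_R v if and only if su ≤_R sv. -/
open CoxeterSystem

variable {A W : Type*} [Group W] {M : CoxeterMatrix A}

-- Left multiplication by `w` leaves `u⁻¹ * v` unchanged.
theorem wle_mul_left_iff_of_length_mul_left (cs : CoxeterSystem M W) {w u v : W} {k : ℕ}
    (hu : cs.length (w * u) = cs.length u + k) (hv : cs.length (w * v) = cs.length v + k) :
    wle cs (w * u) (w * v) ↔ wle cs u v := by
  have hquot : (w * u)⁻¹ * (w * v) = u⁻¹ * v := by group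
  unfold wle
  rw [hquot, hu, hv]
  omega

/-- If `s ∉ D_L(u)` and `s ∉ D_L(v)`, then `u ≤_R v` iff `su ≤_R sv`. -/
theorem stmt_1 (cs : CoxeterSystem M W) (u v : W) (i : A)
    (hu : ¬ cs.IsLeftDescent u i) (hv : ¬ cs.IsLeftDescent v i) :
    wle cs u v ↔ wle cs (cs.simple i * u) (cs.simple i * v) :=
  (wle_mul_left_iff_of_length_mul_left cs (cs.not_isLeftDescent_iff.mp hu)
    (cs.not_isLeftDescent_iff.mp hv)).symm
end

section
/- For a Garside shadow B in (W,S), the B-projection is monotone with respect to the weak order: if u ≤_R w then π_B(u) ≤_R π_B(w). -/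
open CoxeterSystem

variable {A W : Type*} [Group W] {M : CoxeterMatrix A}

/-- A subset of `W` is bounded in the right weak order. -/
def Bounded (cs : CoxeterSystem M W) (X : Set W) : Prop :=
  ∃ g, ∀ x ∈ X, wle cs x g

/-- `m` is the join (least upper bound) of `X` in the right weak order. -/
def IsJoin (cs : CoxeterSystem M W) (X : Set W) (m : W) : Prop :=
  (∀ x ∈ X, wle cs x m) ∧ ∀ u, (∀ x ∈ X, wle cs x u) → wle cs m u

/-- `v` is a suffix of `w`: `ℓ(w v⁻¹) + ℓ(v) = ℓ(w)`. -/
def IsSuffix (cs : CoxeterSystem M W) (v w : W) : Prop :=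
  cs.length (w * v⁻¹) + cs.length v = cs.length w

/-- A Garside shadow: contains the simple reflections, is closed under joins of
bounded subsets, and is closed under taking suffixes. -/
def IsGarsideShadow (cs : CoxeterSystem M W) (Bs : Set W) : Prop :=
  (∀ i, cs.simple i ∈ Bs) ∧
  (∀ X ⊆ Bs, Bounded cs X → ∀ m, IsJoin cs X m → m ∈ Bs) ∧
  (∀ w ∈ Bs, ∀ v, IsSuffix cs v w → v ∈ Bs)

/-- `π` is the `B`-projection: `π w = ⋁ {g ∈ B | g ≤_R w}`. -/
def IsProj (cs : CoxeterSystem M W) (Bs : Set W) (π : W → W) : Prop :=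
  ∀ w, π w ∈ Bs ∧ IsJoin cs {g | g ∈ Bs ∧ wle cs g w} (π w)

lemma wle_trans (cs : CoxeterSystem M W) {a b c : W} (hab : wle cs a b)
    (hbc : wle cs b c) : wle cs a c := by
  unfold wle at *
  have hbc' := cs.length_mul_le (a⁻¹ * b) (b⁻¹ * c)
  have hac := cs.length_mul_le a (a⁻¹ * c)
  simp only [mul_assoc, mul_inv_cancel_left] at hbc' hac
  omega

lemma IsJoin.wle_of_subset (cs : CoxeterSystem M W) {X Y : Set W} {m n : W}
    (hm : IsJoin cs X m) (hn : IsJoin cs Y n) (hXY : X ⊆ Y) : wle cs m n :=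
  hm.2 n fun x hx => hn.1 x (hXY hx)

theorem stmt_4_general (cs : CoxeterSystem M W) (Bs : Set W)
    (π : W → W) (hπ : IsProj cs Bs π) (u w : W) (huw : wle cs u w) :
    wle cs (π u) (π w) :=
  (hπ u).2.wle_of_subset cs (hπ w).2 fun _ ⟨hgB, hgu⟩ => ⟨hgB, wle_trans cs hgu huw⟩

/-- The `B`-projection is monotone for the right weak order. -/
theorem stmt_4 (cs : CoxeterSystem M W) (Bs : Set W) (hB : IsGarsideShadow cs Bs)
    (π : W → W) (hπ : IsProj cs Bs π) (u w : W) (huw : wle cs u w) :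
    wle cs (π u) (π w) :=
  stmt_4_general cs Bs π hπ u w huw
end

section
/- For a Garside shadow B in (W,S) and any w ∈ W, the left descent sets of w and π_B(w) coincide: D_L(w) = D_L(π_B(w)). -/
open CoxeterSystem

variable {A W : Type*} [Group W] {M : CoxeterMatrix A}

section

variable (cs : CoxeterSystem M W)

lemma wle_trans_s5 {u v g : W} (huv : wle cs u v) (hvg : wle cs v g) : wle cs u g := by
  unfold wle at *
  have h₁ : cs.length (u⁻¹ * g) ≤ cs.length (u⁻¹ * v) + cs.length (v⁻¹ * g) := by
    simpa [mul_assoc] using cs.length_mul_le (u⁻¹ * v) (v⁻¹ * g)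
  have h₂ : cs.length g ≤ cs.length u + cs.length (u⁻¹ * g) := by
    simpa using cs.length_mul_le u (u⁻¹ * g)
  omega

lemma wle_simple_iff_isLeftDescent (w : W) (i : A) :
    wle cs (cs.simple i) w ↔ cs.IsLeftDescent w i := by
  rw [cs.isLeftDescent_iff, wle, cs.length_simple, cs.inv_simple]
  omega

variable {cs} {Bs : Set W} {π : W → W}

lemma IsProj.wle_self (hπ : IsProj cs Bs π) (w : W) : wle cs (π w) w :=
  (hπ w).2.2 w fun _ hg => hg.2

lemma IsProj.wle_of_mem (hπ : IsProj cs Bs π) {g w : W} (hg : g ∈ Bs) (hgw : wle cs g w) :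
    wle cs g (π w) :=
  (hπ w).2.1 g ⟨hg, hgw⟩

end

/-- Left descent sets are invariant under Garside shadow projections:
`D_L(w) = D_L(π_B(w))`. -/
theorem stmt_5 (cs : CoxeterSystem M W) (Bs : Set W) (hB : IsGarsideShadow cs Bs)
    (π : W → W) (hπ : IsProj cs Bs π) (w : W) :
    {i | cs.IsLeftDescent w i} = {i | cs.IsLeftDescent (π w) i} := by
  ext i
  change cs.IsLeftDescent w i ↔ cs.IsLeftDescent (π w) i
  rw [← wle_simple_iff_isLeftDescent, ← wle_simple_iff_isLeftDescent]
  exact ⟨hπ.wle_of_mem (hB.1 i), fun h => wle_trans_s5 cs h (hπ.wle_self w)⟩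
end

section
/- Let B be a Garside shadow in (W,S), w ∈ W, and s ∈ S with s ∉ D_L(w). Then π_B(sw) = π_B(s·π_B(w)). -/
open CoxeterSystem

variable {A W : Type*} [Group W] {M : CoxeterMatrix A}

/-!
Write `s = sᵢ`, `p = π_B(w)` and `r = π_B(sw)`. Since `p ≤_R w` and `s ∉ D_L(w)`, left
multiplication by `s` gives `sp ≤_R sw`, hence `π_B(sp) ≤_R r` by monotonicity of the projection.
Conversely `s ∈ B` and `s ≤_R sw` force `s ≤_R r`, so `sr` is a suffix of `r`, hence lies in `B`;
cancelling `s` from `r ≤_R sw` gives `sr ≤_R w`, so `sr ≤_R p`, and multiplying back by `s`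
yields `r ≤_R sp`, i.e. `r ≤_R π_B(sp)`.
-/

variable {cs : CoxeterSystem M W} {u v x : W} {i : A}

namespace wle

theorem trans (huv : wle cs u v) (hvx : wle cs v x) : wle cs u x := by
  unfold wle at *
  have h₁ := cs.length_mul_le (u⁻¹ * v) (v⁻¹ * x)
  have h₂ := cs.length_mul_le u (u⁻¹ * x)
  simp only [mul_assoc, mul_inv_cancel_left] at h₁ h₂
  omega

theorem antisymm (huv : wle cs u v) (hvu : wle cs v u) : u = v := by
  unfold wle at huv hvu
  have h : cs.length (u⁻¹ * v) = 0 := by omega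
  exact inv_mul_eq_one.mp (cs.length_eq_zero_iff.mp h)

theorem isLeftDescent (huv : wle cs u v) (hu : cs.IsLeftDescent u i) :
    cs.IsLeftDescent v i := by
  unfold wle at huv
  unfold IsLeftDescent at hu ⊢
  have h := cs.length_mul_le (cs.simple i * u) (u⁻¹ * v)
  simp only [mul_assoc, mul_inv_cancel_left] at h
  omega

theorem simple_mul (huv : wle cs u v)
    (hd : cs.IsLeftDescent u i ↔ cs.IsLeftDescent v i) :
    wle cs (cs.simple i * u) (cs.simple i * v) := by
  unfold wle at huv ⊢
  have e : (cs.simple i * u)⁻¹ * (cs.simple i * v) = u⁻¹ * v := by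
    rw [mul_inv_rev, cs.inv_simple, mul_assoc, cs.simple_mul_simple_cancel_left]
  rw [e]
  by_cases hu : cs.IsLeftDescent u i
  · have hu' := cs.isLeftDescent_iff.mp hu
    have hv' := cs.isLeftDescent_iff.mp (hd.mp hu)
    omega
  · have hu' := cs.not_isLeftDescent_iff.mp hu
    have hv' := cs.not_isLeftDescent_iff.mp (mt hd.mpr hu)
    omega

end wle

theorem wle_simple_iff : wle cs (cs.simple i) v ↔ cs.IsLeftDescent v i := by
  rw [wle, cs.length_simple, cs.inv_simple, cs.isLeftDescent_iff]
  omega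

theorem isLeftDescent_simple_mul_of_not (h : ¬ cs.IsLeftDescent v i) :
    cs.IsLeftDescent (cs.simple i * v) i := by
  rwa [cs.isLeftDescent_iff_not_isLeftDescent_mul, cs.simple_mul_simple_cancel_left]

theorem isSuffix_simple_mul (h : cs.IsLeftDescent v i) : IsSuffix cs (cs.simple i * v) v := by
  have e : v * (cs.simple i * v)⁻¹ = cs.simple i := by
    rw [mul_inv_rev, mul_inv_cancel_left, cs.inv_simple]
  rw [IsSuffix, e, cs.length_simple]
  have := cs.isLeftDescent_iff.mp h
  omega

theorem IsGarsideShadow.simple_mul_mem {Bs : Set W} (hB : IsGarsideShadow cs Bs) (hv : v ∈ Bs)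
    (h : cs.IsLeftDescent v i) : cs.simple i * v ∈ Bs :=
  hB.2.2 v hv _ (isSuffix_simple_mul h)

namespace IsProj

variable {Bs : Set W} {π : W → W}

theorem wle_self_s7 (hπ : IsProj cs Bs π) (w : W) : wle cs (π w) w :=
  (hπ w).2.2 w fun _ hx => hx.2

theorem wle_of_mem_s7 (hπ : IsProj cs Bs π) (hu : u ∈ Bs) (huv : wle cs u v) :
    wle cs u (π v) :=
  (hπ v).2.1 u ⟨hu, huv⟩

theorem monotone (hπ : IsProj cs Bs π) (huv : wle cs u v) : wle cs (π u) (π v) :=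
  hπ.wle_of_mem_s7 (hπ u).1 ((hπ.wle_self_s7 u).trans huv)

end IsProj

/-- If `s ∉ D_L(w)`, then `π_B(sw) = π_B(s·π_B(w))`. -/
theorem stmt_7 (cs : CoxeterSystem M W) (Bs : Set W) (hB : IsGarsideShadow cs Bs)
    (π : W → W) (hπ : IsProj cs Bs π) (w : W) (i : A)
    (hw : ¬ cs.IsLeftDescent w i) :
    π (cs.simple i * w) = π (cs.simple i * π w) := by
  set s := cs.simple i
  set r := π (s * w)
  have hpw := hπ.wle_self_s7 w
  have hp : ¬ cs.IsLeftDescent (π w) i := fun h => hw (hpw.isLeftDescent h)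
  have hsw : cs.IsLeftDescent (s * w) i := isLeftDescent_simple_mul_of_not hw
  have hr : cs.IsLeftDescent r i :=
    wle_simple_iff.mp (hπ.wle_of_mem_s7 (hB.1 i) (wle_simple_iff.mpr hsw))
  have hsrw : wle cs (s * r) w := by
    simpa only [s, cs.simple_mul_simple_cancel_left] using
      (hπ.wle_self_s7 (s * w)).simple_mul (iff_of_true hr hsw)
  have hsrp : wle cs (s * r) (π w) := hπ.wle_of_mem_s7 (hB.simple_mul_mem (hπ _).1 hr) hsrw
  have hrsp : wle cs r (s * π w) := by
    simpa only [s, cs.simple_mul_simple_cancel_left] using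
      hsrp.simple_mul (iff_of_false (cs.isLeftDescent_iff_not_isLeftDescent_mul.mp hr) hp)
  exact (hπ.wle_of_mem_s7 (hπ _).1 hrsp).antisymm (hπ.monotone (hpw.simple_mul (iff_of_false hp hw)))
end

section
/- Let B be a Garside shadow in (W,S) and I ⊆ S. Then B ∩ W_I is a Garside shadow in the Coxeter system (W_I, I), where W_I is the standard parabolic subgroup generated by I. -/
/-
The only point is that the parabolic subgroup `W_I` is closed under prefixes in the right weak
order: then joins (bounded by an element of `W_I`) and suffixes computed in `W` of elements of
`B ∩ W_I` stay in `W_I`. For prefixes it suffices that every right descent `s` of `w ∈ W_I` lies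
in `W_I`. This is read off Tits' reflection cocycle `n(w, t) ∈ ZMod 2`: it satisfies
`n(uv, t) = n(v, t) + n(u, v t v⁻¹)` and `n(s, t) = [t = s]`, so `n(w, t) = 1` forces `t ∈ W_I`
for `w ∈ W_I`, while a length argument shows `n(w, t) = 1` whenever `ℓ(w t) < ℓ(w)`.
-/

open CoxeterSystem

variable {A W : Type*} [Group W] {M : CoxeterMatrix A}

/-- The standard parabolic subgroup `W_I`. -/
def parabolic (cs : CoxeterSystem M W) (I : Set A) : Subgroup W :=
  Subgroup.closure (cs.simple '' I)

/-- A Garside shadow in the Coxeter system `(W_I, I)` (whose length function and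
weak order are the restrictions of those of `(W,S)`). -/
def IsGarsideShadowIn (cs : CoxeterSystem M W) (I : Set A) (Bs : Set W) : Prop :=
  Bs ⊆ (parabolic cs I : Set W) ∧
  (∀ i ∈ I, cs.simple i ∈ Bs) ∧
  (∀ X ⊆ Bs, (∃ g ∈ parabolic cs I, ∀ x ∈ X, wle cs x g) →
    ∀ m, IsJoin cs X m → m ∈ Bs) ∧
  (∀ w ∈ Bs, ∀ v, IsSuffix cs v w → v ∈ Bs)

/-- `π'` is the `B'`-projection for the Coxeter system `(W_I, I)`. -/
def IsProjIn (cs : CoxeterSystem M W) (I : Set A) (Bs : Set W) (π' : W → W) : Prop :=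
  ∀ w ∈ (parabolic cs I : Set W),
    π' w ∈ Bs ∧ IsJoin cs {g | g ∈ Bs ∧ wle cs g w} (π' w)

/-- `p` is the map `w ↦ w_I` of the unique decomposition `w = w_I w^I`,
`w_I ∈ W_I`, `w^I ∈ X_I` (minimal coset representatives). -/
def IsParabolicProj (cs : CoxeterSystem M W) (I : Set A) (p : W → W) : Prop :=
  ∀ w, p w ∈ parabolic cs I ∧
    ∀ i ∈ I, cs.length ((p w)⁻¹ * w) < cs.length (cs.simple i * ((p w)⁻¹ * w))

open Classical in
noncomputable def oneIf (P : Prop) : ZMod 2 := if P then 1 else 0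

lemma oneIf_pos {P : Prop} (h : P) : oneIf P = 1 := by simp [oneIf, h]

lemma oneIf_neg {P : Prop} (h : ¬P) : oneIf P = 0 := by simp [oneIf, h]

namespace CoxeterSystem

section ReflectionRepresentation

variable (cs : CoxeterSystem M W)

local prefix:100 "s " => cs.simple
local prefix:100 "ℓ " => cs.length

/- Tits' permutation representation: `s i` acts on pairs `(t, ε)` by conjugating `t` and flipping
the sign `ε` exactly when `t = s i`. Letting `t` range over all of `W` instead of the reflections
changes nothing. -/
noncomputable def simpleAction (i : A) : Function.End (W × ZMod 2) :=
  fun q => (s i * q.1 * s i, q.2 + oneIf (q.1 = s i))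

lemma conj_simple_mul_simple_eq_iff (i i' : A) (w : W) (k : ℕ) :
    (s i * s i') * w * (s i * s i')⁻¹ = s i * (s i * s i') ^ k ↔
      w = s i * (s i * s i') ^ (k + 2) := by
  have hshift : (s i * s i')⁻¹ * (s i * (s i * s i') ^ k) * (s i * s i') =
      s i * (s i * s i') ^ (k + 2) := by
    calc (s i * s i')⁻¹ * (s i * (s i * s i') ^ k) * (s i * s i')
        = ((s i * s i')⁻¹ * s i) * ((s i * s i') ^ k * (s i * s i')) := by group
      _ = s i * ((s i * s i') * (s i * s i') ^ (k + 1)) := by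
        rw [show (s i * s i')⁻¹ * s i = s i * (s i * s i') by simp [mul_assoc, cs.inv_simple],
          ← pow_succ, mul_assoc]
      _ = s i * (s i * s i') ^ (k + 2) := by rw [← pow_succ']
  rw [← hshift]
  constructor
  · intro h
    rw [← h]
    group
  · rintro rfl
    group

lemma simpleAction_mul_simpleAction_apply (i i' : A) (w : W) (z : ZMod 2) :
    (cs.simpleAction i * cs.simpleAction i') (w, z) =
      ((s i * s i') * w * (s i * s i')⁻¹,
        z + ∑ k ∈ Finset.range 2, oneIf (w = s i * (s i * s i') ^ (k + 1))) := by
  have h1 : w = s i' ↔ w = s i * (s i * s i') ^ 1 := by simp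
  have h2 : s i' * w * s i' = s i ↔ w = s i * (s i * s i') ^ 2 := by
    have hp : s i * (s i * s i') ^ 2 = s i' * s i * s i' := by simp [pow_two, mul_assoc]
    rw [hp]
    constructor
    · intro h
      rw [← h]
      simp [mul_assoc]
    · rintro rfl
      simp [mul_assoc]
  refine Prod.ext ?_ ?_
  · show s i * (s i' * w * s i') * s i = _
    simp only [mul_inv_rev, cs.inv_simple, mul_assoc]
  · show z + oneIf (w = s i') + oneIf (s i' * w * s i' = s i) = _
    rw [propext h1, propext h2, Finset.sum_range_succ, Finset.sum_range_one, add_assoc]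

lemma simpleAction_mul_simpleAction_pow_apply (i i' : A) (n : ℕ) (w : W) (z : ZMod 2) :
    ((cs.simpleAction i * cs.simpleAction i') ^ n) (w, z) =
      ((s i * s i') ^ n * w * ((s i * s i') ^ n)⁻¹,
        z + ∑ k ∈ Finset.range (2 * n), oneIf (w = s i * (s i * s i') ^ (k + 1))) := by
  induction n generalizing w z with
  | zero => simp [Function.End.one_def]
  | succ n ih =>
    rw [pow_succ]
    change ((cs.simpleAction i * cs.simpleAction i') ^ n)
      ((cs.simpleAction i * cs.simpleAction i') (w, z)) = _
    rw [simpleAction_mul_simpleAction_apply, ih]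
    refine Prod.ext ?_ ?_
    · simp only [pow_succ, mul_inv_rev, mul_assoc]
    · rw [mul_add, mul_one, add_comm (2 * n) 2, Finset.sum_range_add, add_assoc]
      simp only [conj_simple_mul_simple_eq_iff, add_right_comm _ 1 2, add_comm _ 2]

/- Along `(s i * s i') ^ M i i'` the sign changes once for each of `2 * M i i'` indicators which
repeat with period `M i i'`, so it changes an even number of times. -/
lemma isLiftable_simpleAction : M.IsLiftable cs.simpleAction := by
  intro i i'
  funext ⟨w, z⟩
  rw [simpleAction_mul_simpleAction_pow_apply, cs.simple_mul_simple_pow]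
  have hperiodic : ∀ k, (s i * s i') ^ (M i i' + k + 1) = (s i * s i') ^ (k + 1) := by
    intro k
    rw [add_assoc, pow_add, cs.simple_mul_simple_pow, one_mul]
  simp only [two_mul, Finset.sum_range_add, hperiodic, CharTwo.add_self_eq_zero, add_zero,
    one_mul, mul_one, inv_one]
  rfl

noncomputable def reflectionRep : W →* Function.End (W × ZMod 2) :=
  cs.lift ⟨cs.simpleAction, cs.isLiftable_simpleAction⟩

lemma reflectionRep_simple (i : A) : cs.reflectionRep (s i) = cs.simpleAction i :=
  cs.lift_apply_simple cs.isLiftable_simpleAction i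

/-- The parity of the number of occurrences of `t` in the right inversion sequence of any word
for `w`. -/
noncomputable def reflectionCocycle (w t : W) : ZMod 2 := (cs.reflectionRep w (t, 0)).2

lemma reflectionRep_apply (w t : W) (z : ZMod 2) :
    cs.reflectionRep w (t, z) = (w * t * w⁻¹, z + cs.reflectionCocycle w t) := by
  induction w using cs.simple_induction_left generalizing t z with
  | one => simp [reflectionCocycle, Function.End.one_def]
  | mul_simple_left w i ih =>
    have hstep : ∀ z', cs.reflectionRep (s i * w) (t, z') =
        (s i * (w * t * w⁻¹) * s i,
          z' + cs.reflectionCocycle w t + oneIf (w * t * w⁻¹ = s i)) := by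
      intro z'
      rw [map_mul]
      change cs.reflectionRep (s i) (cs.reflectionRep w (t, z')) = _
      rw [ih, reflectionRep_simple]
      rfl
    rw [reflectionCocycle, hstep, hstep, zero_add, add_assoc]
    simp only [mul_inv_rev, cs.inv_simple, mul_assoc]

lemma reflectionCocycle_one (t : W) : cs.reflectionCocycle 1 t = 0 := by
  simp [reflectionCocycle, Function.End.one_def]

lemma reflectionCocycle_mul (u v t : W) :
    cs.reflectionCocycle (u * v) t =
      cs.reflectionCocycle v t + cs.reflectionCocycle u (v * t * v⁻¹) := by
  rw [reflectionCocycle, map_mul]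
  change (cs.reflectionRep u (cs.reflectionRep v (t, 0))).2 = _
  rw [reflectionRep_apply, reflectionRep_apply, zero_add]

lemma reflectionCocycle_simple (i : A) (t : W) :
    cs.reflectionCocycle (s i) t = oneIf (t = s i) := by
  rw [reflectionCocycle, reflectionRep_simple]
  exact zero_add _

lemma reflectionCocycle_inv (w t : W) :
    cs.reflectionCocycle w⁻¹ (w * t * w⁻¹) = cs.reflectionCocycle w t := by
  have h := cs.reflectionCocycle_mul w⁻¹ w t
  rw [inv_mul_cancel, reflectionCocycle_one] at h
  exact (CharTwo.add_eq_zero.mp h.symm).symm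

lemma reflectionCocycle_self {t : W} (ht : cs.IsReflection t) : cs.reflectionCocycle t t = 1 := by
  obtain ⟨v, i, rfl⟩ := ht
  have hconj : v⁻¹ * (v * s i * v⁻¹) * v⁻¹⁻¹ = s i := by group
  have hsimple : s i * s i * (s i)⁻¹ = s i := by simp
  rw [reflectionCocycle_mul, hconj, reflectionCocycle_mul, reflectionCocycle_simple, hsimple,
    reflectionCocycle_inv, oneIf_pos rfl]
  simp only [← add_assoc, add_comm _ (1 : ZMod 2), CharTwo.add_cancel_right]

lemma reflectionCocycle_mul_self (w : W) {t : W} (ht : cs.IsReflection t) :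
    cs.reflectionCocycle (w * t) t = cs.reflectionCocycle w t + 1 := by
  rw [reflectionCocycle_mul, reflectionCocycle_self cs ht, mul_inv_cancel_right, add_comm]

lemma reflectionCocycle_eq_zero_of_length_lt {w t : W} (ht : cs.IsReflection t)
    (hlt : ℓ w < ℓ (w * t)) : cs.reflectionCocycle w t = 0 := by
  induction hn : ℓ w generalizing w t with
  | zero => rw [cs.length_eq_zero_iff.mp hn, reflectionCocycle_one]
  | succ n ih =>
    obtain ⟨j, hj⟩ := cs.exists_rightDescent_of_ne_one (w := w) (by rintro rfl; simp at hn)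
    have hwj : ℓ (w * s j) + 1 = ℓ w := by
      have := cs.length_mul_simple w j
      unfold IsRightDescent at hj
      omega
    have htj : t ≠ s j := by
      rintro rfl
      exact absurd hlt (by unfold IsRightDescent at hj; omega)
    have hcocycle : cs.reflectionCocycle w t = cs.reflectionCocycle (w * s j) (s j * t * s j) := by
      conv_lhs => rw [← cs.simple_mul_simple_cancel_right (w := w) j]
      rw [reflectionCocycle_mul, reflectionCocycle_simple, oneIf_neg htj, zero_add, cs.inv_simple]
    have hconj : cs.IsReflection (s j * t * s j) := by simpa [cs.inv_simple] using ht.conj (s j)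
    have hlen : ℓ (w * s j * (s j * t * s j)) = ℓ (w * t * s j) := by
      simp only [mul_assoc, cs.simple_mul_simple_cancel_left]
    rw [hcocycle]
    refine ih hconj ?_ (by omega)
    have := cs.length_mul_simple (w * t) j
    omega

lemma reflectionCocycle_eq_one_of_isRightInversion {w t : W} (h : cs.IsRightInversion w t) :
    cs.reflectionCocycle w t = 1 := by
  obtain ⟨ht, hlt⟩ := h
  have hwtt : w * t * t = w := by rw [mul_assoc, ht.mul_self, mul_one]
  have h0 : cs.reflectionCocycle (w * t) t = 0 :=
    cs.reflectionCocycle_eq_zero_of_length_lt ht (by rwa [hwtt])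
  have h1 := cs.reflectionCocycle_mul_self (w * t) ht
  rwa [hwtt, h0, zero_add] at h1

end ReflectionRepresentation

section Parabolic

variable (cs : CoxeterSystem M W) (I : Set A)

local prefix:100 "s " => cs.simple
local prefix:100 "ℓ " => cs.length

lemma mem_parabolic_of_reflectionCocycle_eq_one {w t : W} (hw : w ∈ parabolic cs I)
    (ht : cs.reflectionCocycle w t = 1) : t ∈ parabolic cs I := by
  have hw' : w ∈ Subgroup.closure (cs.simple '' I) := hw
  show t ∈ Subgroup.closure (cs.simple '' I)
  induction hw' using Subgroup.closure_induction generalizing t with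
  | mem x hx =>
    obtain ⟨i, hi, rfl⟩ := hx
    by_cases h : t = s i
    · exact h ▸ Subgroup.subset_closure ⟨i, hi, rfl⟩
    · rw [reflectionCocycle_simple, oneIf_neg h] at ht
      exact absurd ht zero_ne_one
  | one =>
    rw [reflectionCocycle_one] at ht
    exact absurd ht zero_ne_one
  | mul x y hx hy ihx ihy =>
    rw [reflectionCocycle_mul] at ht
    have hsum : ∀ a b : ZMod 2, a + b = 1 → a = 1 ∨ b = 1 := by decide
    rcases hsum _ _ ht with h | h
    · exact ihy hy h
    · simpa [mul_assoc] using mul_mem (mul_mem (inv_mem hy) (ihx hx h)) hy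
  | inv x hx ihx =>
    have h : cs.reflectionCocycle x (x⁻¹ * t * x) = 1 := by
      rwa [← reflectionCocycle_inv, ← mul_assoc, ← mul_assoc, mul_inv_cancel, one_mul,
        mul_inv_cancel_right]
    simpa [mul_assoc] using mul_mem (mul_mem hx (ihx hx h)) (inv_mem hx)

lemma simple_mem_parabolic_of_isRightDescent {w : W} (hw : w ∈ parabolic cs I) {i : A}
    (hi : cs.IsRightDescent w i) : s i ∈ parabolic cs I :=
  mem_parabolic_of_reflectionCocycle_eq_one cs I hw <|
    cs.reflectionCocycle_eq_one_of_isRightInversion <|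
      (cs.isRightInversion_simple_iff_isRightDescent w i).mpr hi

lemma wle_mul_simple_of_isRightDescent {u w : W} (h : wle cs u w) {i : A}
    (hi : cs.IsRightDescent (u⁻¹ * w) i) : wle cs u (w * s i) ∧ cs.IsRightDescent w i := by
  unfold wle IsRightDescent at *
  have hle : ℓ (w * s i) ≤ ℓ u + ℓ (u⁻¹ * w * s i) := by
    simpa [mul_assoc] using cs.length_mul_le u (u⁻¹ * w * s i)
  have := cs.length_mul_simple (u⁻¹ * w) i
  have := cs.length_mul_simple w i
  rw [← mul_assoc]
  omega

lemma mem_parabolic_of_wle {u w : W} (h : wle cs u w) (hw : w ∈ parabolic cs I) :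
    u ∈ parabolic cs I := by
  induction hn : ℓ (u⁻¹ * w) generalizing w with
  | zero => rwa [inv_mul_eq_one.mp (cs.length_eq_zero_iff.mp hn)]
  | succ n ih =>
    obtain ⟨i, hi⟩ :=
      cs.exists_rightDescent_of_ne_one (w := u⁻¹ * w) (by rintro h; simp [h] at hn)
    obtain ⟨h', hdesc⟩ := wle_mul_simple_of_isRightDescent cs h hi
    refine ih h' (mul_mem hw (simple_mem_parabolic_of_isRightDescent cs I hw hdesc)) ?_
    have := cs.length_mul_simple (u⁻¹ * w) i
    unfold IsRightDescent at hi
    rw [← mul_assoc]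
    omega

lemma mem_parabolic_of_isSuffix {v w : W} (h : IsSuffix cs v w) (hw : w ∈ parabolic cs I) :
    v ∈ parabolic cs I := by
  have hprefix : wle cs (w * v⁻¹) w := by
    rwa [wle, mul_inv_rev, inv_inv, mul_assoc, inv_mul_cancel, mul_one]
  simpa using mul_mem (inv_mem (mem_parabolic_of_wle cs I hprefix hw)) hw

end Parabolic

end CoxeterSystem

/-- If `B` is a Garside shadow in `(W,S)`, then `B ∩ W_I` is a Garside shadow in
the Coxeter system `(W_I, I)`. -/
theorem stmt_12 (cs : CoxeterSystem M W) (Bs : Set W) (hB : IsGarsideShadow cs Bs)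
    (I : Set A) :
    IsGarsideShadowIn cs I (Bs ∩ (parabolic cs I : Set W)) := by
  obtain ⟨hS, hJ, hSuf⟩ := hB
  refine ⟨Set.inter_subset_right,
    fun i hi => ⟨hS i, Subgroup.subset_closure ⟨i, hi, rfl⟩⟩, ?_, ?_⟩
  · rintro X hX ⟨g, hg, hub⟩ m hm
    exact ⟨hJ X (fun x hx => (hX hx).1) ⟨g, hub⟩ m hm,
      mem_parabolic_of_wle cs I (hm.2 g hub) hg⟩
  · rintro w ⟨hwB, hw⟩ v hv
    exact ⟨hSuf w hwB v hv, mem_parabolic_of_isSuffix cs I hv hw⟩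
end

section
/- Let X be a bounded subset of W (in the right weak order) and I ⊆ S. Then p_I(⋁X) = ⋁ p_I(X), where p_I : W → W_I sends w to the W_I-component of its decomposition w = w_I w^I. -/
open CoxeterSystem

variable {A W : Type*} [Group W] {M : CoxeterMatrix A}

/-!
Write `N(w)` for the set of left inversions of `w`. Tits' sign cocycle shows that every left
inversion of `π ω` occurs in the left inversion sequence of the word `ω`, and that
`N(x d) = N(x) Δ x N(d) x⁻¹`; hence `u ≤_R v` iff `N(u) ⊆ N(v)`, and a longest common lower
bound of `u` and `v` is their meet. For `W_I` this gives: `N(w) ⊆ W_I` when `w ∈ W_I`, no element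
of `X_I` has an inversion in `W_I`, lengths add in `w = w_I w^I`, and `N(w) ∩ W_I ⊆ N(w_I)`.
So `p_I` is monotone, and `p_I(u)` bounds `p_I(X)`.

Let `v` bound `p_I(X)` and `z = u ∧ v`; then `b = p_I(z)` bounds `p_I(X)` and `b ≤ u`. Any such
`b ∈ W_I` equals `p_I(u)`: if `s ∈ I` were a left descent of `b⁻¹u`, then (by induction on
`ℓ(b⁻¹u)`) `τ = b s b⁻¹` makes `τu` a coatom of `u = ⋁X`, so `τ` inverts some `x ∈ X`, hence
`p_I(x)` and `b`, contradicting `ℓ(τb) = ℓ(bs) > ℓ(b)`. Thus `p_I(u) = b ≤ z ≤ v`.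
-/

namespace CoxeterSystem

variable (cs : CoxeterSystem M W)

open scoped Classical

/-- The action of `s i` in Tits' construction of the sign cocycle. -/
noncomputable def signPerm (i : A) : Equiv.Perm (W × ℤˣ) :=
  Function.Involutive.toPerm
    (fun x => (cs.simple i * x.1 * cs.simple i, if x.1 = cs.simple i then -x.2 else x.2))
    (by
      rintro ⟨t, ε⟩
      by_cases h : t = cs.simple i
      · simp [h]
      · simp [h, mul_assoc, mul_eq_one_iff_eq_inv])

theorem signPerm_apply (i : A) (t : W) (ε : ℤˣ) :
    cs.signPerm i (t, ε) = (cs.simple i * t * cs.simple i, if t = cs.simple i then -ε else ε) :=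
  rfl

theorem prod_map_signPerm_apply (ω : List A) (t : W) (ε : ℤˣ) :
    (ω.map cs.signPerm).prod (t, ε) =
      (cs.wordProd ω * t * (cs.wordProd ω)⁻¹,
        ((cs.rightInvSeq ω).map fun r => if r = t then (-1 : ℤˣ) else 1).prod * ε) := by
  induction ω with
  | nil => simp
  | cons i ω ih =>
    have hcond : cs.wordProd ω * t * (cs.wordProd ω)⁻¹ = cs.simple i ↔
        (cs.wordProd ω)⁻¹ * cs.simple i * cs.wordProd ω = t := by
      constructor <;> intro h <;> [rw [← h]; rw [← h]] <;> group
    simp only [List.map_cons, List.prod_cons, Equiv.Perm.mul_apply, ih, signPerm_apply,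
      rightInvSeq, wordProd_cons, hcond]
    split_ifs <;> simp [mul_assoc]

theorem alternatingWord_reverse (i j : A) (p : ℕ) :
    (alternatingWord i j (2 * p)).reverse = alternatingWord j i (2 * p) := by
  apply List.ext_getElem (by simp)
  intro k hk _
  simp only [List.length_reverse, length_alternatingWord] at hk
  rw [List.getElem_reverse, getElem_alternatingWord _ _ _ _ (by simp; omega),
    getElem_alternatingWord _ _ _ _ hk]
  simp only [length_alternatingWord]
  have : Even (2 * p + (2 * p - 1 - k)) ↔ ¬ Even (2 * p + k) := by
    simp only [Nat.even_iff]; omega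
  by_cases h : Even (2 * p + k) <;> simp [h, this]

theorem isLiftable_signPerm : M.IsLiftable cs.signPerm := by
  intro i j
  have hword : ∀ p, (cs.signPerm i * cs.signPerm j) ^ p =
      ((alternatingWord i j (2 * p)).map cs.signPerm).prod := by
    intro p
    induction p with
    | zero => simp [alternatingWord]
    | succ p ih =>
      rw [show 2 * (p + 1) = 2 * p + 1 + 1 by ring, alternatingWord_succ', alternatingWord_succ']
      simp [pow_succ', ih, mul_assoc]
  set L := cs.leftInvSeq (alternatingWord j i (2 * M i j)) with hL
  have hlen : L.length = 2 * M i j := by simp [hL]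
  -- the inversion sequence of the braid word is `M i j`-periodic, so every sign occurs twice
  have hperiodic : L.drop (M i j) = L.take (M i j) := by
    apply List.ext_getElem (by simp [hlen]; omega)
    intro k h₁ h₂
    simp only [List.length_drop, hlen] at h₁
    simp only [List.getElem_drop, List.getElem_take, hL]
    rw [getElem_leftInvSeq_alternatingWord cs j i (M i j) _ (by omega),
      getElem_leftInvSeq_alternatingWord cs j i (M i j) _ (by omega),
      prod_alternatingWord_eq_mul_pow, prod_alternatingWord_eq_mul_pow]
    rw [show (2 * (M i j + k) + 1) / 2 = k + M i j by omega,
      show (2 * k + 1) / 2 = k by omega, pow_add, simple_mul_simple_pow, mul_one,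
      if_neg (Nat.not_even_two_mul_add_one _), if_neg (Nat.not_even_two_mul_add_one _)]
  ext ⟨t, ε⟩ : 1
  rw [hword, prod_map_signPerm_apply, ← alternatingWord_reverse, rightInvSeq_reverse,
    alternatingWord_reverse, ← hL, List.map_reverse, List.prod_reverse,
    ← List.take_append_drop (M i j) L, List.map_append, List.prod_append, hperiodic,
    Int.units_mul_self, prod_alternatingWord_eq_mul_pow]
  simp

noncomputable def signRep : W →* Equiv.Perm (W × ℤˣ) :=
  cs.lift ⟨cs.signPerm, cs.isLiftable_signPerm⟩

noncomputable def inversionSign (w t : W) : ℤˣ := (cs.signRep w (t, 1)).2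

theorem signRep_wordProd (ω : List A) : cs.signRep (cs.wordProd ω) = (ω.map cs.signPerm).prod := by
  simp [wordProd, map_list_prod, signRep, Function.comp_def,
    cs.lift_apply_simple cs.isLiftable_signPerm]

theorem signRep_apply (w t : W) (ε : ℤˣ) :
    cs.signRep w (t, ε) = (w * t * w⁻¹, cs.inversionSign w t * ε) := by
  obtain ⟨ω, rfl⟩ := cs.wordProd_surjective w
  rw [inversionSign, signRep_wordProd, prod_map_signPerm_apply, prod_map_signPerm_apply, mul_one]

theorem inversionSign_wordProd (ω : List A) (t : W) :
    cs.inversionSign (cs.wordProd ω) t =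
      ((cs.rightInvSeq ω).map fun r => if r = t then (-1 : ℤˣ) else 1).prod := by
  simp [inversionSign, signRep_wordProd, prod_map_signPerm_apply]

theorem inversionSign_mul (u v t : W) :
    cs.inversionSign (u * v) t = cs.inversionSign u (v * t * v⁻¹) * cs.inversionSign v t := by
  rw [inversionSign, map_mul, Equiv.Perm.mul_apply, signRep_apply, signRep_apply, mul_one]

theorem inversionSign_simple (i : A) (t : W) :
    cs.inversionSign (cs.simple i) t = if t = cs.simple i then -1 else 1 := by
  simp [inversionSign, signRep, lift_apply_simple, signPerm_apply, apply_ite]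

theorem inversionSign_inv (w t : W) :
    cs.inversionSign w⁻¹ (w * t * w⁻¹) = cs.inversionSign w t := by
  have h := cs.inversionSign_mul w⁻¹ w t
  rw [inv_mul_cancel, show cs.inversionSign 1 t = 1 by simp [inversionSign]] at h
  simpa [Int.units_inv_eq_self] using eq_inv_of_mul_eq_one_left h.symm

theorem inversionSign_self {t : W} (ht : cs.IsReflection t) : cs.inversionSign t t = -1 := by
  obtain ⟨w, i, rfl⟩ := ht
  have hconj : w⁻¹ * (w * cs.simple i * w⁻¹) * w⁻¹⁻¹ = cs.simple i := by group
  rw [cs.inversionSign_mul (w * cs.simple i), hconj, cs.inversionSign_mul w, cs.inversionSign_inv,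
    inv_simple, simple_mul_simple_cancel_right, inversionSign_simple, if_pos rfl, mul_comm,
    ← mul_assoc, Int.units_mul_self, one_mul]

theorem mem_rightInvSeq_of_inversionSign_eq_neg_one {ω : List A} {t : W}
    (h : cs.inversionSign (cs.wordProd ω) t = -1) : t ∈ cs.rightInvSeq ω := by
  by_contra ht
  rw [inversionSign_wordProd, List.prod_eq_one] at h
  · exact absurd h (by decide)
  · simp only [List.mem_map]
    rintro _ ⟨r, hr, rfl⟩
    rw [if_neg (ne_of_mem_of_not_mem hr ht)]

theorem isRightInversion_iff_inversionSign {w t : W} (ht : cs.IsReflection t) :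
    cs.IsRightInversion w t ↔ cs.inversionSign w t = -1 := by
  have of_sign : ∀ w, cs.inversionSign w t = -1 → cs.IsRightInversion w t := by
    intro w h
    obtain ⟨ω, hω, rfl⟩ := cs.exists_isReduced w
    exact cs.isRightInversion_of_mem_rightInvSeq hω
      (cs.mem_rightInvSeq_of_inversionSign_eq_neg_one h)
  refine ⟨fun hw => ?_, of_sign w⟩
  have hsplit := cs.inversionSign_mul (w * t) t t
  rw [mul_inv_cancel_right, mul_assoc, ht.mul_self, mul_one, cs.inversionSign_self ht] at hsplit
  rcases Int.units_eq_one_or (cs.inversionSign (w * t) t) with h | h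
  · rw [hsplit, h, one_mul]
  · have := (of_sign _ h).2
    rw [mul_assoc, ht.mul_self, mul_one] at this
    exact absurd hw.2 (not_lt.mpr this.le)

theorem isLeftInversion_iff_inversionSign {w t : W} (ht : cs.IsReflection t) :
    cs.IsLeftInversion w t ↔ cs.inversionSign w⁻¹ t = -1 := by
  rw [← isRightInversion_inv_iff, cs.isRightInversion_iff_inversionSign ht]

theorem mem_leftInvSeq_of_isLeftInversion {ω : List A} {t : W}
    (h : cs.IsLeftInversion (cs.wordProd ω) t) : t ∈ cs.leftInvSeq ω := by
  rw [cs.isLeftInversion_iff_inversionSign h.1, ← wordProd_reverse] at h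
  simpa [rightInvSeq_reverse] using cs.mem_rightInvSeq_of_inversionSign_eq_neg_one h

theorem isLeftInversion_mul_iff {x d t : W} (ht : cs.IsReflection t) :
    cs.IsLeftInversion (x * d) t ↔
      (cs.IsLeftInversion x t ↔ ¬ cs.IsLeftInversion d (x⁻¹ * t * x)) := by
  have ht' : cs.IsReflection (x⁻¹ * t * x) := by simpa using ht.conj x⁻¹
  rw [cs.isLeftInversion_iff_inversionSign ht, cs.isLeftInversion_iff_inversionSign ht,
    cs.isLeftInversion_iff_inversionSign ht', mul_inv_rev, inversionSign_mul, inv_inv]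
  rcases Int.units_eq_one_or (cs.inversionSign d⁻¹ (x⁻¹ * t * x)) with h | h <;>
    rcases Int.units_eq_one_or (cs.inversionSign x⁻¹ t) with h' | h' <;> simp [h, h']

theorem isLeftInversion_simple_iff {i : A} {t : W} :
    cs.IsLeftInversion (cs.simple i) t ↔ t = cs.simple i := by
  constructor
  · rintro ⟨-, h⟩
    rw [length_simple, Nat.lt_one_iff, length_eq_zero_iff, mul_eq_one_iff_eq_inv, inv_simple] at h
    exact h
  · rintro rfl
    exact (cs.isLeftInversion_simple_iff_isLeftDescent _ i).mpr (by simp [IsLeftDescent])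

theorem isLeftInversion_simple_mul_iff {i : A} {w t : W} (ht : cs.IsReflection t)
    (hne : t ≠ cs.simple i) :
    cs.IsLeftInversion (cs.simple i * w) t ↔
      cs.IsLeftInversion w (cs.simple i * t * cs.simple i) := by
  rw [cs.isLeftInversion_mul_iff ht, cs.isLeftInversion_simple_iff, inv_simple]
  tauto

theorem exists_isReduced_sublist (ω : List A) :
    ∃ ω' : List A, ω'.Sublist ω ∧ cs.IsReduced ω' ∧ cs.wordProd ω' = cs.wordProd ω := by
  induction ω with
  | nil => exact ⟨[], List.Sublist.slnil, by simp [IsReduced], rfl⟩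
  | cons i ω ih =>
    obtain ⟨τ, hsub, hτ, hprod⟩ := ih
    rcases cs.length_simple_mul (cs.wordProd τ) i with h | h
    · refine ⟨i :: τ, hsub.cons_cons i, ?_, by rw [wordProd_cons, wordProd_cons, hprod]⟩
      rw [IsReduced, wordProd_cons, h, hτ.eq, List.length_cons]
    · -- `s i` is a left inversion of `π τ`, so deleting a letter of `τ` multiplies it by `s i`
      have hinv : cs.IsLeftInversion (cs.wordProd τ) (cs.simple i) :=
        ⟨cs.isReflection_simple i, by omega⟩
      obtain ⟨k, hk, hki⟩ := List.mem_iff_getElem.mp (cs.mem_leftInvSeq_of_isLeftInversion hinv)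
      have hdel : cs.simple i * cs.wordProd τ = cs.wordProd (τ.eraseIdx k) := by
        rw [← cs.getD_leftInvSeq_mul_wordProd, List.getD_eq_getElem _ _ hk, hki]
      refine ⟨τ.eraseIdx k, (List.eraseIdx_sublist τ k).trans (hsub.cons i), ?_, ?_⟩
      · rw [length_leftInvSeq] at hk
        rw [IsReduced, ← hdel, List.length_eraseIdx_of_lt hk, ← hτ.eq]
        omega
      · rw [← hdel, wordProd_cons, hprod]

variable {I : Set A}

theorem simple_mem_parabolic {j : A} (hj : j ∈ I) : cs.simple j ∈ parabolic cs I :=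
  Subgroup.subset_closure ⟨j, hj, rfl⟩

theorem wordProd_mem_parabolic {ω : List A} (hω : ∀ a ∈ ω, a ∈ I) :
    cs.wordProd ω ∈ parabolic cs I := by
  refine Subgroup.list_prod_mem _ fun w hw => ?_
  obtain ⟨a, ha, rfl⟩ := List.mem_map.mp hw
  exact cs.simple_mem_parabolic (hω a ha)

theorem exists_word_of_mem_parabolic {w : W} (hw : w ∈ parabolic cs I) :
    ∃ ω : List A, (∀ a ∈ ω, a ∈ I) ∧ cs.wordProd ω = w := by
  induction hw using Subgroup.closure_induction_left with
  | one => exact ⟨[], by simp, rfl⟩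
  | mul_left _ hx _ _ ih =>
    obtain ⟨a, ha, rfl⟩ := hx
    obtain ⟨ω, hω, rfl⟩ := ih
    exact ⟨a :: ω, by simpa [ha] using hω, wordProd_cons _ _ _⟩
  | inv_mul_cancel _ hx _ _ ih =>
    obtain ⟨a, ha, rfl⟩ := hx
    obtain ⟨ω, hω, rfl⟩ := ih
    exact ⟨a :: ω, by simpa [ha] using hω, by rw [wordProd_cons, inv_simple]⟩

theorem exists_leftDescent_of_mem_parabolic {w : W} (hw : w ∈ parabolic cs I) (h1 : w ≠ 1) :
    ∃ j ∈ I, cs.IsLeftDescent w j := by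
  obtain ⟨ω, hωI, rfl⟩ := cs.exists_word_of_mem_parabolic hw
  obtain ⟨τ, hsub, hτ, hprod⟩ := cs.exists_isReduced_sublist ω
  rw [← hprod] at h1 ⊢
  rcases τ with _ | ⟨j, τ⟩
  · exact absurd rfl h1
  · refine ⟨j, hωI j (hsub.subset List.mem_cons_self), ?_⟩
    have := cs.length_wordProd_le τ
    rw [IsLeftDescent, wordProd_cons, simple_mul_simple_cancel_left, ← wordProd_cons, hτ.eq,
      List.length_cons]
    omega

theorem mem_parabolic_of_isLeftInversion {w t : W} (hw : w ∈ parabolic cs I)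
    (ht : cs.IsLeftInversion w t) : t ∈ parabolic cs I := by
  obtain ⟨ω, hωI, rfl⟩ := cs.exists_word_of_mem_parabolic hw
  obtain ⟨k, hk, rfl⟩ := List.mem_iff_getElem.mp (cs.mem_leftInvSeq_of_isLeftInversion ht)
  rw [length_leftInvSeq] at hk
  have htake : cs.wordProd (ω.take k) ∈ parabolic cs I :=
    cs.wordProd_mem_parabolic fun a ha => hωI a (List.mem_of_mem_take ha)
  rw [getElem_leftInvSeq _ _ _ hk]
  exact mul_mem (mul_mem htake (cs.simple_mem_parabolic (hωI _ (List.getElem_mem hk))))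
    (inv_mem htake)

theorem one_wle (w : W) : wle cs 1 w := by simp [wle]

theorem length_le_of_wle {u v : W} (h : wle cs u v) : cs.length u ≤ cs.length v :=
  Nat.le.intro h

theorem wle_trans {u v w : W} (huv : wle cs u v) (hvw : wle cs v w) : wle cs u w := by
  unfold wle at *
  have h₁ := cs.length_mul_le (u⁻¹ * v) (v⁻¹ * w)
  have h₂ := cs.length_mul_le u (u⁻¹ * w)
  simp only [mul_assoc, mul_inv_cancel_left] at h₁ h₂
  omega

theorem isLeftInversion_of_wle {u v t : W} (h : wle cs u v) (ht : cs.IsLeftInversion u t) :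
    cs.IsLeftInversion v t := by
  refine ⟨ht.1, ?_⟩
  have := cs.length_mul_le (t * u) (u⁻¹ * v)
  simp only [mul_assoc, mul_inv_cancel_left] at this
  unfold wle at h
  have := ht.2
  omega

theorem isLeftDescent_of_wle {u v : W} {i : A} (h : wle cs u v) (hu : cs.IsLeftDescent u i) :
    cs.IsLeftDescent v i := by
  rw [← isLeftInversion_simple_iff_isLeftDescent] at hu ⊢
  exact cs.isLeftInversion_of_wle h hu

theorem simple_mul_wle_simple_mul_iff {i : A} {c d : W} (hc : cs.IsLeftDescent c i)
    (hd : cs.IsLeftDescent d i) :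
    wle cs (cs.simple i * c) (cs.simple i * d) ↔ wle cs c d := by
  rw [isLeftDescent_iff] at hc hd
  unfold wle
  rw [show (cs.simple i * c)⁻¹ * (cs.simple i * d) = c⁻¹ * d by group]
  omega

theorem simple_mul_wle_iff {i : A} {z u : W} (hz : ¬ cs.IsLeftDescent z i)
    (hu : cs.IsLeftDescent u i) : wle cs (cs.simple i * z) u ↔ wle cs z (cs.simple i * u) := by
  have hz' : cs.IsLeftDescent (cs.simple i * z) i := by
    rwa [isLeftDescent_iff_not_isLeftDescent_mul, simple_mul_simple_cancel_left]
  rw [← cs.simple_mul_wle_simple_mul_iff hz' hu, simple_mul_simple_cancel_left]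

theorem wle_of_forall_isLeftInversion {u v : W}
    (h : ∀ t, cs.IsLeftInversion u t → cs.IsLeftInversion v t) : wle cs u v := by
  obtain ⟨n, hn⟩ : ∃ n, cs.length u = n := ⟨_, rfl⟩
  induction n generalizing u v with
  | zero => rw [cs.length_eq_zero_iff.mp hn]; exact cs.one_wle v
  | succ n ih =>
    obtain ⟨i, hi⟩ := cs.exists_leftDescent_of_ne_one (w := u) (by rintro rfl; simp at hn)
    have hvi : cs.IsLeftDescent v i :=
      (cs.isLeftInversion_simple_iff_isLeftDescent v i).mp
        (h _ ((cs.isLeftInversion_simple_iff_isLeftDescent u i).mpr hi))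
    rw [← cs.simple_mul_wle_simple_mul_iff hi hvi]
    refine ih (fun t ht => ?_) (by rw [isLeftDescent_iff] at hi; omega)
    have hne : t ≠ cs.simple i := by
      rintro rfl
      exact (cs.isLeftDescent_iff_not_isLeftDescent_mul.mp hi)
        ((cs.isLeftInversion_simple_iff_isLeftDescent _ i).mp ht)
    have hrefl := ht.1
    rw [cs.isLeftInversion_simple_mul_iff hrefl hne] at ht ⊢
    exact h _ ht

theorem wle_mul_of_not_isLeftInversion {x u t : W} (hxu : wle cs x u) (ht : cs.IsReflection t)
    (hcov : cs.length (t * u) + 1 = cs.length u) (hxt : ¬ cs.IsLeftInversion x t) :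
    wle cs x (t * u) := by
  obtain ⟨d, rfl⟩ : ∃ d, u = x * d := ⟨x⁻¹ * u, by group⟩
  have htu : cs.IsLeftInversion (x * d) t := ⟨ht, by omega⟩
  have hd := (not_not.mp (((cs.isLeftInversion_mul_iff ht).mp htu).not.mp hxt)).2
  have hed := cs.length_mul_le x (x⁻¹ * t * x * d)
  rw [show x * (x⁻¹ * t * x * d) = t * (x * d) by group] at hed
  unfold wle at hxu ⊢
  rw [show x⁻¹ * (t * (x * d)) = x⁻¹ * t * x * d by group]
  rw [inv_mul_cancel_left] at hxu
  omega

theorem wle_of_forall_length_le {u v z c : W} (hzu : wle cs z u) (hzv : wle cs z v)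
    (hmax : ∀ y, wle cs y u → wle cs y v → cs.length y ≤ cs.length z)
    (hcu : wle cs c u) (hcv : wle cs c v) : wle cs c z := by
  obtain ⟨n, hn⟩ : ∃ n, cs.length c = n := ⟨_, rfl⟩
  induction n generalizing u v z c with
  | zero => rw [cs.length_eq_zero_iff.mp hn]; exact cs.one_wle z
  | succ n ih =>
    obtain ⟨i, hi⟩ := cs.exists_leftDescent_of_ne_one (w := c) (by rintro rfl; simp at hn)
    have hui := cs.isLeftDescent_of_wle hcu hi
    have hvi := cs.isLeftDescent_of_wle hcv hi
    -- otherwise `s i * z` would be a longer common lower bound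
    have hzi : cs.IsLeftDescent z i := by
      by_contra hzi
      have lift : ∀ {w}, wle cs z w → cs.IsLeftDescent w i → wle cs (cs.simple i * z) w :=
        fun hzw hwi => (cs.simple_mul_wle_iff hzi hwi).mpr <|
          cs.wle_mul_of_not_isLeftInversion hzw (cs.isReflection_simple i)
            ((cs.isLeftDescent_iff).mp hwi)
            (by rwa [isLeftInversion_simple_iff_isLeftDescent])
      have := hmax _ (lift hzu hui) (lift hzv hvi)
      rw [cs.not_isLeftDescent_iff.mp hzi] at this
      omega
    rw [← cs.simple_mul_wle_simple_mul_iff hi hzi]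
    refine ih ((cs.simple_mul_wle_simple_mul_iff hzi hui).mpr hzu)
      ((cs.simple_mul_wle_simple_mul_iff hzi hvi).mpr hzv) (fun y hyu hyv => ?_)
      ((cs.simple_mul_wle_simple_mul_iff hi hui).mpr hcu)
      ((cs.simple_mul_wle_simple_mul_iff hi hvi).mpr hcv)
      (by rw [isLeftDescent_iff] at hi; omega)
    have hyi : ¬ cs.IsLeftDescent y i := fun hyi =>
      cs.isLeftDescent_iff_not_isLeftDescent_mul.mp hui (cs.isLeftDescent_of_wle hyu hyi)
    have := hmax _ ((cs.simple_mul_wle_iff hyi hui).mpr hyu)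
      ((cs.simple_mul_wle_iff hyi hvi).mpr hyv)
    rw [cs.not_isLeftDescent_iff.mp hyi] at this
    rw [isLeftDescent_iff] at hzi
    omega

theorem exists_wle_meet (u v : W) :
    ∃ z, wle cs z u ∧ wle cs z v ∧ ∀ c, wle cs c u → wle cs c v → wle cs c z := by
  let P n := ∃ c, wle cs c u ∧ wle cs c v ∧ cs.length c = n
  obtain ⟨z, hzu, hzv, hz⟩ : P (Nat.findGreatest P (cs.length u)) :=
    Nat.findGreatest_spec (Nat.zero_le _) ⟨1, cs.one_wle u, cs.one_wle v, cs.length_one⟩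
  refine ⟨z, hzu, hzv, fun c hcu hcv => cs.wle_of_forall_length_le hzu hzv ?_ hcu hcv⟩
  intro y hyu hyv
  rw [hz]
  exact Nat.le_findGreatest (cs.length_le_of_wle hyu) ⟨y, hyu, hyv, rfl⟩

theorem exists_isLeftInversion_of_isJoin {X : Set W} {u t : W} (hu : IsJoin cs X u)
    (ht : cs.IsReflection t) (hcov : cs.length (t * u) + 1 = cs.length u) :
    ∃ x ∈ X, cs.IsLeftInversion x t := by
  by_contra! h
  have := cs.length_le_of_wle
    (hu.2 _ fun x hx => cs.wle_mul_of_not_isLeftInversion (hu.1 x hx) ht hcov (h x hx))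
  omega

/-- The paper's `X_I`: minimal length representatives of the cosets `W_I w`. -/
def minCosetReps (I : Set A) : Set W := {y | ∀ i ∈ I, ¬ cs.IsLeftDescent y i}

theorem mem_minCosetReps_of_wle {y' y : W} (h : wle cs y' y) (hy : y ∈ cs.minCosetReps I) :
    y' ∈ cs.minCosetReps I := fun i hi hdesc =>
  hy i hi (cs.isLeftDescent_of_wle h hdesc)

theorem not_isLeftInversion_of_mem_minCosetReps {y t : W} (hy : y ∈ cs.minCosetReps I)
    (ht : t ∈ parabolic cs I) : ¬ cs.IsLeftInversion y t := by
  obtain ⟨n, hn⟩ : ∃ n, cs.length y = n := ⟨_, rfl⟩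
  induction n generalizing y t with
  | zero =>
    rintro ⟨-, h⟩
    omega
  | succ n ih =>
    intro hyt
    obtain ⟨k, hk⟩ := cs.exists_rightDescent_of_ne_one (w := y) (by rintro rfl; simp at hn)
    obtain ⟨y', rfl⟩ : ∃ y', y = y' * cs.simple k := ⟨y * cs.simple k, by simp⟩
    rw [isRightDescent_iff, simple_mul_simple_cancel_right] at hk
    have hy' : y' ∈ cs.minCosetReps I :=
      cs.mem_minCosetReps_of_wle (by simp [wle, length_simple]; omega) hy
    have hy'len : cs.length y' = n := by omega
    have hconj : y'⁻¹ * t * y' = cs.simple k := by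
      refine cs.isLeftInversion_simple_iff.mp (by_contra fun h => ?_)
      exact ih hy' ht hy'len (((cs.isLeftInversion_mul_iff hyt.1).mp hyt).mpr h)
    -- `t` has a left descent `s j` with `j ∈ I`, and `t s_j t` is then an inversion of `y' = t y`
    obtain ⟨j, hj, htj⟩ := cs.exists_leftDescent_of_mem_parabolic ht
      (by rintro rfl; simpa using hyt.2)
    have hty : t * (y' * cs.simple k) = y' := by
      rw [← hconj]
      simp only [mul_assoc, mul_inv_cancel_left]
      rw [← mul_assoc, hyt.1.mul_self, one_mul]
    have hr : cs.IsLeftInversion t (t * cs.simple j * t) := by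
      refine ⟨by simpa [hyt.1.inv] using (cs.isReflection_simple j).conj t, ?_⟩
      rw [mul_assoc, hyt.1.mul_self, mul_one, ← length_inv, mul_inv_rev, inv_simple, hyt.1.inv]
      exact htj
    have hyr : cs.IsLeftInversion (t * (y' * cs.simple k)) (t * cs.simple j * t) := by
      rw [cs.isLeftInversion_mul_iff hr.1, hyt.1.inv,
        show t * (t * cs.simple j * t) * t = cs.simple j by
          rw [← mul_assoc, ← mul_assoc, hyt.1.mul_self, one_mul, mul_assoc, hyt.1.mul_self,
            mul_one],
        cs.isLeftInversion_simple_iff_isLeftDescent]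
      exact iff_of_true hr (hy j hj)
    rw [hty] at hyr
    have hrI : t * cs.simple j * t ∈ parabolic cs I :=
      mul_mem (mul_mem ht (cs.simple_mem_parabolic hj)) ht
    exact ih hy' hrI hy'len hyr

theorem length_mul_of_mem_minCosetReps {b y : W} (hb : b ∈ parabolic cs I)
    (hy : y ∈ cs.minCosetReps I) : cs.length (b * y) = cs.length b + cs.length y := by
  obtain ⟨n, hn⟩ : ∃ n, cs.length b = n := ⟨_, rfl⟩
  induction n generalizing b with
  | zero => simp [cs.length_eq_zero_iff.mp hn]
  | succ n ih =>
    obtain ⟨j, hj, hbj⟩ := cs.exists_leftDescent_of_mem_parabolic hb (by rintro rfl; simp at hn)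
    obtain ⟨b', rfl⟩ : ∃ b', b = cs.simple j * b' := ⟨cs.simple j * b, by simp⟩
    have hb' : b' ∈ parabolic cs I := by
      simpa using mul_mem (cs.simple_mem_parabolic hj) hb
    rw [isLeftDescent_iff, simple_mul_simple_cancel_left] at hbj
    have hb'y := ih hb' (by omega)
    have hnot : ¬ cs.IsLeftInversion (b' * y) (cs.simple j) := by
      have hb'j : ¬ cs.IsLeftDescent b' j := by rw [isLeftDescent_iff]; omega
      have hconj : b'⁻¹ * cs.simple j * b' ∈ parabolic cs I :=
        mul_mem (mul_mem (inv_mem hb') (cs.simple_mem_parabolic hj)) hb'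
      have := cs.not_isLeftInversion_of_mem_minCosetReps hy hconj
      rw [cs.isLeftInversion_mul_iff (cs.isReflection_simple j),
        cs.isLeftInversion_simple_iff_isLeftDescent]
      tauto
    rw [cs.isLeftInversion_simple_iff_isLeftDescent, cs.not_isLeftDescent_iff] at hnot
    rw [mul_assoc, hnot, hb'y]
    omega

theorem eq_of_mul_eq_mul_of_mem_minCosetReps {b₁ b₂ y₁ y₂ : W} (hb₁ : b₁ ∈ parabolic cs I)
    (hb₂ : b₂ ∈ parabolic cs I) (hy₁ : y₁ ∈ cs.minCosetReps I) (hy₂ : y₂ ∈ cs.minCosetReps I)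
    (h : b₁ * y₁ = b₂ * y₂) : b₁ = b₂ := by
  have hd : b₂⁻¹ * b₁ ∈ parabolic cs I := mul_mem (inv_mem hb₂) hb₁
  have h₁ := cs.length_mul_of_mem_minCosetReps hd hy₁
  have h₂ := cs.length_mul_of_mem_minCosetReps (inv_mem hd) hy₂
  rw [show b₂⁻¹ * b₁ * y₁ = y₂ by rw [mul_assoc, h, inv_mul_cancel_left]] at h₁
  rw [show (b₂⁻¹ * b₁)⁻¹ * y₂ = y₁ by rw [mul_inv_rev, inv_inv, mul_assoc, ← h,
    inv_mul_cancel_left], length_inv] at h₂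
  have : b₂⁻¹ * b₁ = 1 := cs.length_eq_zero_iff.mp (by omega)
  exact (inv_mul_eq_one.mp this).symm

theorem one_mem_minCosetReps : (1 : W) ∈ cs.minCosetReps I :=
  fun i _ => cs.not_isLeftDescent_one i

end CoxeterSystem

namespace IsParabolicProj

variable {cs : CoxeterSystem M W} {I : Set A} {p : W → W}

theorem inv_mul_mem_minCosetReps (hp : IsParabolicProj cs I p) (w : W) :
    (p w)⁻¹ * w ∈ cs.minCosetReps I := fun i hi hdesc =>
  (hp w).2 i hi |>.not_gt hdesc

theorem wle_self (hp : IsParabolicProj cs I p) (w : W) : wle cs (p w) w := by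
  have := cs.length_mul_of_mem_minCosetReps (hp w).1 (hp.inv_mul_mem_minCosetReps w)
  rwa [mul_inv_cancel_left, eq_comm] at this

theorem apply_eq {b w : W} (hp : IsParabolicProj cs I p) (hb : b ∈ parabolic cs I)
    (hw : b⁻¹ * w ∈ cs.minCosetReps I) : p w = b :=
  cs.eq_of_mul_eq_mul_of_mem_minCosetReps (hp w).1 hb (hp.inv_mul_mem_minCosetReps w) hw
    (by simp)

theorem apply_of_mem {c : W} (hp : IsParabolicProj cs I p) (hc : c ∈ parabolic cs I) : p c = c :=
  hp.apply_eq hc (by simpa using cs.one_mem_minCosetReps)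

theorem isLeftInversion {x t : W} (hp : IsParabolicProj cs I p) (hx : cs.IsLeftInversion x t)
    (ht : t ∈ parabolic cs I) : cs.IsLeftInversion (p x) t := by
  rw [← mul_inv_cancel_left (p x) x, cs.isLeftInversion_mul_iff hx.1] at hx
  have hconj : (p x)⁻¹ * t * p x ∈ parabolic cs I :=
    mul_mem (mul_mem (inv_mem (hp x).1) ht) (hp x).1
  have := cs.not_isLeftInversion_of_mem_minCosetReps (hp.inv_mul_mem_minCosetReps x) hconj
  tauto

theorem monotone {x u : W} (hp : IsParabolicProj cs I p) (h : wle cs x u) :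
    wle cs (p x) (p u) :=
  cs.wle_of_forall_isLeftInversion fun _ ht =>
    have htI := cs.mem_parabolic_of_isLeftInversion (hp x).1 ht
    hp.isLeftInversion (cs.isLeftInversion_of_wle h (cs.isLeftInversion_of_wle (hp.wle_self x) ht))
      htI

theorem apply_eq_of_isJoin {X : Set W} {u b : W} (hp : IsParabolicProj cs I p)
    (hu : IsJoin cs X u) (hb : b ∈ parabolic cs I) (hbu : wle cs b u)
    (hXb : ∀ x ∈ X, wle cs (p x) b) : p u = b := by
  refine hp.apply_eq hb ?_
  obtain ⟨n, hn⟩ : ∃ n, cs.length (b⁻¹ * u) = n := ⟨_, rfl⟩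
  induction n generalizing b with
  | zero => rw [cs.length_eq_zero_iff.mp hn]; exact cs.one_mem_minCosetReps
  | succ n ih =>
    intro j hj hdesc
    rw [isLeftDescent_iff] at hdesc
    unfold wle at hbu
    have hbj : cs.length (b * cs.simple j) = cs.length b + 1 := by
      have := cs.length_mul_le (b * cs.simple j) (cs.simple j * (b⁻¹ * u))
      rw [mul_assoc, simple_mul_simple_cancel_left, mul_inv_cancel_left] at this
      rcases cs.length_mul_simple b j with h | h <;> omega
    have hbju : (b * cs.simple j)⁻¹ * u = cs.simple j * (b⁻¹ * u) := by
      rw [mul_inv_rev, inv_simple, mul_assoc]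
    have hb' : b * cs.simple j ∈ parabolic cs I := mul_mem hb (cs.simple_mem_parabolic hj)
    have hb'u : wle cs (b * cs.simple j) u := by unfold wle; rw [hbju]; omega
    have hXb' : ∀ x ∈ X, wle cs (p x) (b * cs.simple j) := fun x hx =>
      cs.wle_trans (hXb x hx) (by simp [wle, length_simple, hbj])
    have hrest := ih hb' hb'u hXb' (by rw [hbju]; omega)
    -- `τ u` is a coatom of `u = ⋁ X` for `τ = b s_j b⁻¹ ∈ W_I`, so `τ` inverts some `x ∈ X`,
    -- hence `p x` and `b`; but `τ b = b s_j` is longer than `b`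
    have hτ : cs.IsReflection (b * cs.simple j * b⁻¹) := ⟨b, j, rfl⟩
    have hτI : b * cs.simple j * b⁻¹ ∈ parabolic cs I := mul_mem hb' (inv_mem hb)
    have hcov : cs.length (b * cs.simple j * b⁻¹ * u) + 1 = cs.length u := by
      rw [show b * cs.simple j * b⁻¹ * u = b * ((b * cs.simple j)⁻¹ * u) by rw [hbju]; group,
        cs.length_mul_of_mem_minCosetReps hb hrest, hbju]
      omega
    obtain ⟨x, hx, hxτ⟩ := cs.exists_isLeftInversion_of_isJoin hu hτ hcov
    have := (cs.isLeftInversion_of_wle (hXb x hx) (hp.isLeftInversion hxτ hτI)).2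
    rw [inv_mul_cancel_right] at this
    omega

end IsParabolicProj

theorem stmt_15_general (cs : CoxeterSystem M W) (I : Set A) (p : W → W)
    (hp : IsParabolicProj cs I p) (X : Set W)
    (u : W) (hu : IsJoin cs X u) :
    IsJoin cs (p '' X) (p u) := by
  refine ⟨Set.forall_mem_image.2 fun x hx => hp.monotone (hu.1 x hx), fun v hv => ?_⟩
  obtain ⟨z, hzu, hzv, hz⟩ := cs.exists_wle_meet u v
  have hXz : ∀ x ∈ X, wle cs (p x) (p z) := fun x hx => by
    have hxz := hz _ (cs.wle_trans (hp.wle_self x) (hu.1 x hx)) (hv _ ⟨x, hx, rfl⟩)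
    simpa only [hp.apply_of_mem (hp x).1] using hp.monotone hxz
  rw [hp.apply_eq_of_isJoin hu (hp z).1 (cs.wle_trans (hp.wle_self z) hzu) hXz]
  exact cs.wle_trans (hp.wle_self z) hzv

/-- For a bounded subset `X ⊆ W`, `p_I(⋁X) = ⋁ p_I(X)`. -/
theorem stmt_15 (cs : CoxeterSystem M W) (I : Set A) (p : W → W)
    (hp : IsParabolicProj cs I p) (X : Set W) (hX : Bounded cs X)
    (u : W) (hu : IsJoin cs X u) :
    IsJoin cs (p '' X) (p u) :=
  stmt_15_general cs I p hp X u hu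
end
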